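/- Let A be a 6-by-6 reciprocal matrix. There exist real numbers X₁, X₂, X₃, c₁, c₂, c₃ such that det(Re(e^{iθ}A) − λI₆) = ∏_{j=1}^{3} (λ² − (X_j²cos²θ + c_j²)) for all θ, λ ∈ ℝ (i.e., the Kippenhahn curve of A consists of three concentric ellipses centered at the origin) if and only if the following three equations hold: 2ξ₁² + 4ξ₂ξ₁ − 2ξ₃ξ₁ − 3ξ₄ξ₁ − 3ξ₅ξ₁ + ξ₂² + ξ₄² + 2ξ₅² + 2ξ₂ξ₃ − 5ξ₂ξ₄ + 2ξ₃ξ₄ − 3ξ₂ξ₅ − 2ξ₃ξ₅ + 4ξ₄ξ₅ = 0; 2ξ₁² + ξ₂ξ₁ − 3ξ₃ξ₁ + ξ₄ξ₁ − 3ξ₅ξ₁ − ξ₂² + ξ₃² − ξ₄² + 2ξ₅² + 2ξ₂ξ₃ − 2ξ₂ξ₄ + 2ξ₃ξ₄ + ξ₂ξ₅ − 3ξ₃ξ₅ + ξ₄ξ₅ = 0; ξ₁³ + 2ξ₂ξ₁² + 4ξ₃ξ₁² + 2ξ₄ξ₁² + 3ξ₅ξ₁² − ξ₂²ξ₁ +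 3ξ₃²ξ₁ − ξ₄²ξ₁ + 3ξ₅²ξ₁ + 3ξ₂ξ₃ξ₁ − 2ξ₂ξ₄ξ₁ + 3ξ₃ξ₄ξ₁ + 4ξ₂ξ₅ξ₁ − 41ξ₃ξ₅ξ₁ + 4ξ₄ξ₅ξ₁ − ξ₂³ − ξ₃³ − ξ₄³ + ξ₅³ + 2ξ₂ξ₃² − 3ξ₂ξ₄² + ξ₃ξ₄² + 2ξ₂ξ₅² + 4ξ₃ξ₅² + 2ξ₄ξ₅² + ξ₂²ξ₃ − 3ξ₂²ξ₄ + 2ξ₃²ξ₄ + 2ξ₂ξ₃ξ₄ − ξ₂²ξ₅ + 3ξ₃²ξ₅ − ξ₄²ξ₅ + 3ξ₂ξ₃ξ₅ − 2ξ₂ξ₄ξ₅ + 3ξ₃ξ₄ξ₅ = 0. -/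

import Mathlib

open Matrix Polynomial

/-- A tridiagonal complex matrix with zero main diagonal whose symmetric
off-diagonal entries have pairwise products equal to one. -/
def IsReciprocal {n : ℕ} (A : Matrix (Fin n) (Fin n) ℂ) : Prop :=
  (∀ i j : Fin n, ((i : ℤ) - (j : ℤ)) ^ 2 ≠ 1 → A i j = 0) ∧
  ∀ i j : Fin n, (j : ℕ) = (i : ℕ) + 1 → A i j * A j i = 1

/-- The Hermitian matrix `Re (e^{iθ} A) = (e^{iθ}A + (e^{iθ}A)*)/2`. -/
noncomputable def RePart {n : ℕ} (θ : ℝ) (A : Matrix (Fin n) (Fin n) ℂ) :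
    Matrix (Fin n) (Fin n) ℂ :=
  (2 : ℂ)⁻¹ • (Complex.exp (θ * Complex.I) • A + (Complex.exp (θ * Complex.I) • A)ᴴ)

/-!
The determinant of `Re (e^{iθ} A) - λ` only sees the products of opposite off-diagonal entries,
which are `cos² θ + ξ_j`; it is therefore a cubic in `μ = λ²` whose coefficients are polynomials
in `t = cos² θ`. Comparing its coefficients with those of `∏ (μ - X_j² t - c_j²)` forces the
`X_j²` to be the roots `4 cos² (kπ/7)` of `x³ - 5x² + 6x - 1` (top degree in `t`), and then,
through a Vandermonde system, `c_j² = f (X_j²)` for an explicit quadratic `f` whose coefficients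
are linear in `ξ`. For these choices the product and the determinant differ by
`(E₁ μ - E₂ t) / 7 - E₃ / 49`, where `E₁, E₂, E₃` are the three polynomials of the statement.
Conversely, when they vanish the same choices work: the `c_j²` are then roots of a cubic with
alternating nonnegative coefficients, hence nonnegative.
-/

open ComplexConjugate Real Set

/-- `pathCubic p₁ … p₅ (z ^ 2)` is the determinant of a `6 × 6` tridiagonal matrix with diagonal
`-z` whose opposite off-diagonal entries have products `p₁, …, p₅`: its coefficients sum the
products over the matchings of the path on six vertices. -/
def pathCubic {R : Type*} [CommRing R] (p₁ p₂ p₃ p₄ p₅ x : R) : R :=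
  x ^ 3 - (p₁ + p₂ + p₃ + p₄ + p₅) * x ^ 2
    + (p₁ * p₃ + p₁ * p₄ + p₁ * p₅ + p₂ * p₄ + p₂ * p₅ + p₃ * p₅) * x - p₁ * p₃ * p₅

theorem det_eq_pathCubic {R : Type*} [CommRing R] (M : Matrix (Fin 6) (Fin 6) R) (z : R)
    (hdiag : ∀ i, M i i = -z) (hzero : ∀ i j : Fin 6, 1 < ((i : ℤ) - j) ^ 2 → M i j = 0) :
    M.det = pathCubic (M 0 1 * M 1 0) (M 1 2 * M 2 1) (M 2 3 * M 3 2) (M 3 4 * M 4 3)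
      (M 4 5 * M 5 4) (z ^ 2) := by
  have hM : M = !![-z, M 0 1, 0, 0, 0, 0; M 1 0, -z, M 1 2, 0, 0, 0; 0, M 2 1, -z, M 2 3, 0, 0;
      0, 0, M 3 2, -z, M 3 4, 0; 0, 0, 0, M 4 3, -z, M 4 5; 0, 0, 0, 0, M 5 4, -z] := by
    ext i j
    fin_cases i <;> fin_cases j <;> first | exact hdiag _ | exact hzero _ _ (by decide) | rfl
  rw [hM]
  simp [det_succ_row_zero, Fin.sum_univ_succ, Fin.succAbove, pathCubic]
  ring

theorem RePart_apply {n : ℕ} (θ : ℝ) (A : Matrix (Fin n) (Fin n) ℂ) (i j : Fin n) :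
    RePart θ A i j =
      (Complex.exp (θ * Complex.I) * A i j + conj (Complex.exp (θ * Complex.I) * A j i)) / 2 := by
  simp [RePart, div_eq_inv_mul]

theorem RePart_mul_RePart {n : ℕ} (θ : ℝ) {A : Matrix (Fin n) (Fin n) ℂ} {i j : Fin n}
    (h : A i j * A j i = 1) :
    RePart θ A i j * RePart θ A j i = ((cos θ ^ 2 + (‖A i j‖ - ‖A j i‖) ^ 2 / 4 : ℝ) : ℂ) := by
  rw [RePart_apply, RePart_apply]
  set w := Complex.exp (θ * Complex.I)
  set a := A i j
  set b := A j i
  have hw : w * conj w = 1 := by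
    simp [w, Complex.mul_conj, Complex.normSq_eq_norm_sq, Complex.norm_exp_ofReal_mul_I]
  have hcos : w + conj w = 2 * Complex.cos θ := by
    rw [Complex.add_conj, Complex.exp_ofReal_mul_I_re]; push_cast; ring
  have ha : a * conj a = (‖a‖ ^ 2 : ℝ) := by simp [Complex.mul_conj, Complex.normSq_eq_norm_sq]
  have hb : b * conj b = (‖b‖ ^ 2 : ℝ) := by simp [Complex.mul_conj, Complex.normSq_eq_norm_sq]
  have hab : conj a * conj b = 1 := by rw [← map_mul, h, map_one]
  have hnorm : (‖a‖ : ℂ) * ‖b‖ = 1 := by norm_cast; rw [← norm_mul, h, norm_one]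
  simp only [map_mul]
  push_cast at ha hb ⊢
  -- the cross terms are `w² a b + w̄² ā b̄ = w² + w̄² = (w + w̄)² - 2`
  linear_combination (w ^ 2 / 4) * h + (conj w ^ 2 / 4) * hab
    + ((a * conj a + b * conj b - 2) / 4) * hw + (ha + hb) / 4
    + ((w + conj w + 2 * Complex.cos θ) / 4) * hcos + hnorm / 2

theorem det_RePart_sub_smul_one {A : Matrix (Fin 6) (Fin 6) ℂ} (hA : IsReciprocal A)
    (θ lam : ℝ) :
    (RePart θ A - (lam : ℂ) • 1).det =
      ((pathCubic (cos θ ^ 2 + (‖A 0 1‖ - ‖A 1 0‖) ^ 2 / 4)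
        (cos θ ^ 2 + (‖A 1 2‖ - ‖A 2 1‖) ^ 2 / 4) (cos θ ^ 2 + (‖A 2 3‖ - ‖A 3 2‖) ^ 2 / 4)
        (cos θ ^ 2 + (‖A 3 4‖ - ‖A 4 3‖) ^ 2 / 4) (cos θ ^ 2 + (‖A 4 5‖ - ‖A 5 4‖) ^ 2 / 4)
        (lam ^ 2) : ℝ) : ℂ) := by
  obtain ⟨hzero, hprod⟩ := hA
  rw [det_eq_pathCubic _ (lam : ℂ)]
  · simp only [Matrix.sub_apply, Matrix.smul_apply, one_apply_ne, ne_eq, Fin.reduceEq,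
      not_false_eq_true, smul_zero, sub_zero]
    rw [RePart_mul_RePart θ (hprod 0 1 rfl), RePart_mul_RePart θ (hprod 1 2 rfl),
      RePart_mul_RePart θ (hprod 2 3 rfl), RePart_mul_RePart θ (hprod 3 4 rfl),
      RePart_mul_RePart θ (hprod 4 5 rfl)]
    simp [pathCubic]
  · intro i
    simp [RePart_apply, hzero i i (by simp)]
  · intro i j hij
    have hne : i ≠ j := by rintro rfl; simp at hij
    simp [RePart_apply, hzero i j hij.ne', hzero j i (by nlinarith), hne]

theorem nonneg_of_pathCubic_eq_zero {p₁ p₂ p₃ p₄ p₅ x : ℝ} (hp₁ : 0 ≤ p₁) (hp₂ : 0 ≤ p₂)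
    (hp₃ : 0 ≤ p₃) (hp₄ : 0 ≤ p₄) (hp₅ : 0 ≤ p₅) (h : pathCubic p₁ p₂ p₃ p₄ p₅ x = 0) :
    0 ≤ x := by
  by_contra! hx
  have h₃ : x ^ 3 < 0 := Odd.pow_neg (by decide) hx
  have h₂ : 0 ≤ (p₁ + p₂ + p₃ + p₄ + p₅) * x ^ 2 := by positivity
  have h₁ : (p₁ * p₃ + p₁ * p₄ + p₁ * p₅ + p₂ * p₄ + p₂ * p₅ + p₃ * p₅) * x ≤ 0 :=
    mul_nonpos_of_nonneg_of_nonpos (by positivity) hx.le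
  have h₀ : 0 ≤ p₁ * p₃ * p₅ := by positivity
  unfold pathCubic at h
  linarith

theorem cubic_coeffs_eq_zero {c₀ c₁ c₂ c₃ : ℝ}
    (h : ∀ x ∈ Icc (0 : ℝ) 1, c₃ * x ^ 3 + c₂ * x ^ 2 + c₁ * x + c₀ = 0) :
    c₃ = 0 ∧ c₂ = 0 ∧ c₁ = 0 ∧ c₀ = 0 := by
  have h₀ := h 0 (by norm_num)
  have h₁ := h (1 / 3) (by norm_num)
  have h₂ := h (2 / 3) (by norm_num)
  have h₃ := h 1 (by norm_num)
  refine ⟨?_, ?_, ?_, ?_⟩ <;> linarith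

theorem vieta_of_forall_Icc {r₁ r₂ r₃ p q r : ℝ}
    (h : ∀ x ∈ Icc (0 : ℝ) 1, (x - r₁) * (x - r₂) * (x - r₃) = x ^ 3 - p * x ^ 2 + q * x - r) :
    r₁ + r₂ + r₃ = p ∧ r₁ * r₂ + r₁ * r₃ + r₂ * r₃ = q ∧ r₁ * r₂ * r₃ = r := by
  obtain ⟨-, h₂, h₁, h₀⟩ := cubic_coeffs_eq_zero (c₃ := 0) (c₂ := p - (r₁ + r₂ + r₃))
    (c₁ := r₁ * r₂ + r₁ * r₃ + r₂ * r₃ - q) (c₀ := r - r₁ * r₂ * r₃)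
    fun x hx => by linear_combination h x hx
  exact ⟨by linarith, by linarith, by linarith⟩

theorem exists_cos_sq_eq {t : ℝ} (ht : t ∈ Icc (0 : ℝ) 1) : ∃ θ : ℝ, cos θ ^ 2 = t :=
  ⟨arccos √t, by
    rw [cos_arccos (by linarith [sqrt_nonneg t]) (sqrt_le_one.mpr ht.2), sq_sqrt ht.1]⟩

theorem eq_zero_of_esymm_compl_eq_zero {R : Type*} [CommRing R] [IsDomain R]
    {a₁ a₂ a₃ d₁ d₂ d₃ : R} (ha : Function.Injective ![a₁, a₂, a₃])
    (h₀ : d₁ + d₂ + d₃ = 0) (h₁ : a₁ * (d₂ + d₃) + a₂ * (d₁ + d₃) + a₃ * (d₁ + d₂) = 0)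
    (h₂ : a₂ * a₃ * d₁ + a₁ * a₃ * d₂ + a₁ * a₂ * d₃ = 0) :
    d₁ = 0 ∧ d₂ = 0 ∧ d₃ = 0 := by
  have hd := Matrix.eq_zero_of_forall_pow_sum_mul_pow_eq_zero ha (v := ![d₁, d₂, d₃]) (by
    intro i
    fin_cases i <;> simp [Fin.sum_univ_three]
    · linear_combination h₀
    · linear_combination (a₁ + a₂ + a₃) * h₀ - h₁
    · linear_combination h₂ + ((a₁ + a₂ + a₃) ^ 2 - (a₁ * a₂ + a₁ * a₃ + a₂ * a₃)) * h₀
        - (a₁ + a₂ + a₃) * h₁)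
  exact ⟨congrFun hd 0, congrFun hd 1, congrFun hd 2⟩

/-- `(a₁, a₂, a₃)` lists the roots of `x³ - 5x² + 6x - 1 = pathCubic 1 1 1 1 1 x`, namely
`4 cos² (kπ/7)` for `k = 1, 2, 3`, the squared eigenvalues of the path on six vertices. -/
def IsPathRootTriple {R : Type*} [CommRing R] (a₁ a₂ a₃ : R) : Prop :=
  a₁ + a₂ + a₃ = 5 ∧ a₁ * a₂ + a₁ * a₃ + a₂ * a₃ = 6 ∧ a₁ * a₂ * a₃ = 1

theorem exists_isPathRootTriple : ∃ a₁ a₂ a₃ : ℝ, IsPathRootTriple a₁ a₂ a₃ := by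
  -- `u = 2 cos (2π/7)`; the witnesses are `2 + 2 cos (2kπ/7) = 4 cos² (kπ/7)`
  obtain ⟨u, -, hu⟩ : ∃ u ∈ Icc (1 : ℝ) 2, u ^ 3 + u ^ 2 - 2 * u - 1 = 0 :=
    intermediate_value_Icc (by norm_num) (by fun_prop) ⟨by norm_num, by norm_num⟩
  exact ⟨2 + u, u ^ 2, 3 - u - u ^ 2, by ring, by linear_combination (-u) * hu,
    by linear_combination (1 - 2 * u - u ^ 2) * hu⟩

namespace IsPathRootTriple

theorem pathCubic_eq_zero {R : Type*} [CommRing R] {a₁ a₂ a₃ : R}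
    (ha : IsPathRootTriple a₁ a₂ a₃) : pathCubic 1 1 1 1 1 a₁ = 0 := by
  obtain ⟨h₁, h₂, h₃⟩ := ha
  unfold pathCubic
  linear_combination a₁ ^ 2 * h₁ - a₁ * h₂ + h₃

theorem rotate {R : Type*} [CommRing R] {a₁ a₂ a₃ : R} (ha : IsPathRootTriple a₁ a₂ a₃) :
    IsPathRootTriple a₂ a₃ a₁ := by
  obtain ⟨h₁, h₂, h₃⟩ := ha
  exact ⟨by linear_combination h₁, by linear_combination h₂, by linear_combination h₃⟩

theorem nonneg {a₁ a₂ a₃ : ℝ} (ha : IsPathRootTriple a₁ a₂ a₃) :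
    0 ≤ a₁ ∧ 0 ≤ a₂ ∧ 0 ≤ a₃ := by
  have first_nonneg : ∀ {x y z : ℝ}, IsPathRootTriple x y z → 0 ≤ x := fun h =>
    nonneg_of_pathCubic_eq_zero zero_le_one zero_le_one zero_le_one zero_le_one zero_le_one
      h.pathCubic_eq_zero
  exact ⟨first_nonneg ha, first_nonneg ha.rotate, first_nonneg ha.rotate.rotate⟩

theorem injective {a₁ a₂ a₃ : ℝ} (ha : IsPathRootTriple a₁ a₂ a₃) :
    Function.Injective ![a₁, a₂, a₃] := by
  obtain ⟨h₁, h₂, h₃⟩ := ha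
  have hdisc : ((a₁ - a₂) * (a₁ - a₃) * (a₂ - a₃)) ^ 2 = 49 := by grind
  intro i j hij
  fin_cases i <;> fin_cases j <;> simp_all

/-- The norm form of the cubic field `ℚ[a] / (a³ - 5a² + 6a - 1)`: the characteristic polynomial
of `c₀ + c₁ a + c₂ a²`. -/
theorem prod_sub_quadratic {R : Type*} [CommRing R] {a₁ a₂ a₃ : R}
    (ha : IsPathRootTriple a₁ a₂ a₃) (c₀ c₁ c₂ x : R) :
    (x - (c₀ + c₁ * a₁ + c₂ * a₁ ^ 2)) * (x - (c₀ + c₁ * a₂ + c₂ * a₂ ^ 2)) *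
        (x - (c₀ + c₁ * a₃ + c₂ * a₃ ^ 2)) =
      x ^ 3 - (3 * c₀ + 5 * c₁ + 13 * c₂) * x ^ 2
        + (3 * c₀ ^ 2 + 10 * c₀ * c₁ + 26 * c₀ * c₂ + 6 * c₁ ^ 2 + 27 * c₁ * c₂ + 26 * c₂ ^ 2) * x
        - (c₀ ^ 3 + 5 * c₀ ^ 2 * c₁ + 13 * c₀ ^ 2 * c₂ + 6 * c₀ * c₁ ^ 2 + 27 * c₀ * c₁ * c₂
          + 26 * c₀ * c₂ ^ 2 + c₁ ^ 3 + 5 * c₁ ^ 2 * c₂ + 6 * c₁ * c₂ ^ 2 + c₂ ^ 3) := by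
  obtain ⟨h₁, h₂, h₃⟩ := ha
  grind

end IsPathRootTriple

section Ellipses

variable (ξ₁ ξ₂ ξ₃ ξ₄ ξ₅ : ℝ)

/-- The value of `c²` forced on an ellipse `λ² = X² cos² θ + c²` of the curve with `X² = x`. -/
noncomputable def ellipseCSq (x : ℝ) : ℝ :=
  ((-ξ₂ + 2 * ξ₃ - ξ₄) + (4 * ξ₁ + 2 * ξ₂ - 5 * ξ₃ + 2 * ξ₄ + 4 * ξ₅) * x
    + (-ξ₁ + 2 * ξ₃ - ξ₅) * x ^ 2) / 7

def ellipseCond₁ : ℝ :=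
  2 * ξ₁ ^ 2 + 4 * ξ₂ * ξ₁ - 2 * ξ₃ * ξ₁ - 3 * ξ₄ * ξ₁ - 3 * ξ₅ * ξ₁ + ξ₂ ^ 2 + ξ₄ ^ 2
    + 2 * ξ₅ ^ 2 + 2 * ξ₂ * ξ₃ - 5 * ξ₂ * ξ₄ + 2 * ξ₃ * ξ₄ - 3 * ξ₂ * ξ₅
    - 2 * ξ₃ * ξ₅ + 4 * ξ₄ * ξ₅

def ellipseCond₂ : ℝ :=
  2 * ξ₁ ^ 2 + ξ₂ * ξ₁ - 3 * ξ₃ * ξ₁ + ξ₄ * ξ₁ - 3 * ξ₅ * ξ₁ - ξ₂ ^ 2 + ξ₃ ^ 2 - ξ₄ ^ 2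
    + 2 * ξ₅ ^ 2 + 2 * ξ₂ * ξ₃ - 2 * ξ₂ * ξ₄ + 2 * ξ₃ * ξ₄ + ξ₂ * ξ₅
    - 3 * ξ₃ * ξ₅ + ξ₄ * ξ₅

def ellipseCond₃ : ℝ :=
  ξ₁ ^ 3 + 2 * ξ₂ * ξ₁ ^ 2 + 4 * ξ₃ * ξ₁ ^ 2 + 2 * ξ₄ * ξ₁ ^ 2 + 3 * ξ₅ * ξ₁ ^ 2
    - ξ₂ ^ 2 * ξ₁ + 3 * ξ₃ ^ 2 * ξ₁ - ξ₄ ^ 2 * ξ₁ + 3 * ξ₅ ^ 2 * ξ₁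
    + 3 * ξ₂ * ξ₃ * ξ₁ - 2 * ξ₂ * ξ₄ * ξ₁ + 3 * ξ₃ * ξ₄ * ξ₁ + 4 * ξ₂ * ξ₅ * ξ₁
    - 41 * ξ₃ * ξ₅ * ξ₁ + 4 * ξ₄ * ξ₅ * ξ₁ - ξ₂ ^ 3 - ξ₃ ^ 3 - ξ₄ ^ 3 + ξ₅ ^ 3
    + 2 * ξ₂ * ξ₃ ^ 2 - 3 * ξ₂ * ξ₄ ^ 2 + ξ₃ * ξ₄ ^ 2 + 2 * ξ₂ * ξ₅ ^ 2
    + 4 * ξ₃ * ξ₅ ^ 2 + 2 * ξ₄ * ξ₅ ^ 2 + ξ₂ ^ 2 * ξ₃ - 3 * ξ₂ ^ 2 * ξ₄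
    + 2 * ξ₃ ^ 2 * ξ₄ + 2 * ξ₂ * ξ₃ * ξ₄ - ξ₂ ^ 2 * ξ₅ + 3 * ξ₃ ^ 2 * ξ₅
    - ξ₄ ^ 2 * ξ₅ + 3 * ξ₂ * ξ₃ * ξ₅ - 2 * ξ₂ * ξ₄ * ξ₅ + 3 * ξ₃ * ξ₄ * ξ₅

namespace IsPathRootTriple

variable {a₁ a₂ a₃ : ℝ}

theorem prod_eq_pathCubic_add (ha : IsPathRootTriple a₁ a₂ a₃) (t x : ℝ) :
    (x - (a₁ * t + ellipseCSq ξ₁ ξ₂ ξ₃ ξ₄ ξ₅ a₁)) * (x - (a₂ * t + ellipseCSq ξ₁ ξ₂ ξ₃ ξ₄ ξ₅ a₂)) *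
        (x - (a₃ * t + ellipseCSq ξ₁ ξ₂ ξ₃ ξ₄ ξ₅ a₃)) =
      pathCubic (t + ξ₁) (t + ξ₂) (t + ξ₃) (t + ξ₄) (t + ξ₅) x
        + ellipseCond₁ ξ₁ ξ₂ ξ₃ ξ₄ ξ₅ / 7 * x - ellipseCond₂ ξ₁ ξ₂ ξ₃ ξ₄ ξ₅ / 7 * t
        - ellipseCond₃ ξ₁ ξ₂ ξ₃ ξ₄ ξ₅ / 49 := by
  have hquad : ∀ a, a * t + ellipseCSq ξ₁ ξ₂ ξ₃ ξ₄ ξ₅ a = (-ξ₂ + 2 * ξ₃ - ξ₄) / 7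
      + ((4 * ξ₁ + 2 * ξ₂ - 5 * ξ₃ + 2 * ξ₄ + 4 * ξ₅) / 7 + t) * a
      + (-ξ₁ + 2 * ξ₃ - ξ₅) / 7 * a ^ 2 :=
    fun a => by unfold ellipseCSq; ring
  rw [hquad, hquad, hquad, ha.prod_sub_quadratic]
  unfold pathCubic ellipseCond₁ ellipseCond₂ ellipseCond₃
  ring

variable {ξ₁ ξ₂ ξ₃ ξ₄ ξ₅} in
theorem ellipseCSq_nonneg (ha : IsPathRootTriple a₁ a₂ a₃) (hξ₁ : 0 ≤ ξ₁) (hξ₂ : 0 ≤ ξ₂)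
    (hξ₃ : 0 ≤ ξ₃) (hξ₄ : 0 ≤ ξ₄) (hξ₅ : 0 ≤ ξ₅) (h₁ : ellipseCond₁ ξ₁ ξ₂ ξ₃ ξ₄ ξ₅ = 0)
    (h₂ : ellipseCond₂ ξ₁ ξ₂ ξ₃ ξ₄ ξ₅ = 0) (h₃ : ellipseCond₃ ξ₁ ξ₂ ξ₃ ξ₄ ξ₅ = 0) :
    0 ≤ ellipseCSq ξ₁ ξ₂ ξ₃ ξ₄ ξ₅ a₁ := by
  refine nonneg_of_pathCubic_eq_zero hξ₁ hξ₂ hξ₃ hξ₄ hξ₅ ?_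
  have h := ha.prod_eq_pathCubic_add ξ₁ ξ₂ ξ₃ ξ₄ ξ₅ 0 (ellipseCSq ξ₁ ξ₂ ξ₃ ξ₄ ξ₅ a₁)
  simp only [h₁, h₂, h₃, mul_zero, zero_add, sub_self, zero_mul, zero_div, add_zero,
    sub_zero] at h
  exact h.symm

theorem ellipseCSq_linear_eqs (ha : IsPathRootTriple a₁ a₂ a₃) :
    ellipseCSq ξ₁ ξ₂ ξ₃ ξ₄ ξ₅ a₁ + ellipseCSq ξ₁ ξ₂ ξ₃ ξ₄ ξ₅ a₂ + ellipseCSq ξ₁ ξ₂ ξ₃ ξ₄ ξ₅ a₃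
        = ξ₁ + ξ₂ + ξ₃ + ξ₄ + ξ₅ ∧
      a₁ * (ellipseCSq ξ₁ ξ₂ ξ₃ ξ₄ ξ₅ a₂ + ellipseCSq ξ₁ ξ₂ ξ₃ ξ₄ ξ₅ a₃)
        + a₂ * (ellipseCSq ξ₁ ξ₂ ξ₃ ξ₄ ξ₅ a₁ + ellipseCSq ξ₁ ξ₂ ξ₃ ξ₄ ξ₅ a₃)
        + a₃ * (ellipseCSq ξ₁ ξ₂ ξ₃ ξ₄ ξ₅ a₁ + ellipseCSq ξ₁ ξ₂ ξ₃ ξ₄ ξ₅ a₂)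
        = 3 * ξ₁ + 2 * ξ₂ + 2 * ξ₃ + 2 * ξ₄ + 3 * ξ₅ ∧
      a₂ * a₃ * ellipseCSq ξ₁ ξ₂ ξ₃ ξ₄ ξ₅ a₁ + a₁ * a₃ * ellipseCSq ξ₁ ξ₂ ξ₃ ξ₄ ξ₅ a₂
        + a₁ * a₂ * ellipseCSq ξ₁ ξ₂ ξ₃ ξ₄ ξ₅ a₃ = ξ₁ + ξ₃ + ξ₅ := by
  obtain ⟨h₁, h₂, h₃⟩ := ha
  unfold ellipseCSq
  exact ⟨by grind, by grind, by grind⟩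

variable {ξ₁ ξ₂ ξ₃ ξ₄ ξ₅} in
theorem eq_ellipseCSq {b₁ b₂ b₃ : ℝ} (ha : IsPathRootTriple a₁ a₂ a₃)
    (h₀ : b₁ + b₂ + b₃ = ξ₁ + ξ₂ + ξ₃ + ξ₄ + ξ₅)
    (h₁ : a₁ * (b₂ + b₃) + a₂ * (b₁ + b₃) + a₃ * (b₁ + b₂)
      = 3 * ξ₁ + 2 * ξ₂ + 2 * ξ₃ + 2 * ξ₄ + 3 * ξ₅)
    (h₂ : a₂ * a₃ * b₁ + a₁ * a₃ * b₂ + a₁ * a₂ * b₃ = ξ₁ + ξ₃ + ξ₅) :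
    b₁ = ellipseCSq ξ₁ ξ₂ ξ₃ ξ₄ ξ₅ a₁ ∧ b₂ = ellipseCSq ξ₁ ξ₂ ξ₃ ξ₄ ξ₅ a₂ ∧
      b₃ = ellipseCSq ξ₁ ξ₂ ξ₃ ξ₄ ξ₅ a₃ := by
  obtain ⟨f₀, f₁, f₂⟩ := ha.ellipseCSq_linear_eqs ξ₁ ξ₂ ξ₃ ξ₄ ξ₅
  set f := ellipseCSq ξ₁ ξ₂ ξ₃ ξ₄ ξ₅
  simpa only [sub_eq_zero] using eq_zero_of_esymm_compl_eq_zero (d₁ := b₁ - f a₁)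
    (d₂ := b₂ - f a₂) (d₃ := b₃ - f a₃) ha.injective (by linear_combination h₀ - f₀)
    (by linear_combination h₁ - f₁) (by linear_combination h₂ - f₂)

end IsPathRootTriple

end Ellipses

theorem isPathRootTriple_of_pathCubic_eq_prod {a₁ a₂ a₃ b₁ b₂ b₃ ξ₁ ξ₂ ξ₃ ξ₄ ξ₅ : ℝ}
    (h : ∀ t ∈ Icc (0 : ℝ) 1, ∀ x ∈ Icc (0 : ℝ) 1,
      pathCubic (t + ξ₁) (t + ξ₂) (t + ξ₃) (t + ξ₄) (t + ξ₅) x =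
        (x - (a₁ * t + b₁)) * (x - (a₂ * t + b₂)) * (x - (a₃ * t + b₃))) :
    IsPathRootTriple a₁ a₂ a₃ ∧ b₁ = ellipseCSq ξ₁ ξ₂ ξ₃ ξ₄ ξ₅ a₁ ∧
      b₂ = ellipseCSq ξ₁ ξ₂ ξ₃ ξ₄ ξ₅ a₂ ∧ b₃ = ellipseCSq ξ₁ ξ₂ ξ₃ ξ₄ ξ₅ a₃ := by
  have hμ := fun t (ht : t ∈ Icc (0 : ℝ) 1) =>
    vieta_of_forall_Icc fun x hx => (h t ht x hx).symm
  obtain ⟨-, -, hE₁, hF₁⟩ := cubic_coeffs_eq_zero (c₃ := 0) (c₂ := 0) (c₁ := a₁ + a₂ + a₃ - 5)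
    (c₀ := b₁ + b₂ + b₃ - (ξ₁ + ξ₂ + ξ₃ + ξ₄ + ξ₅))
    fun t ht => by linear_combination (hμ t ht).1
  obtain ⟨-, hE₂, hF₂, -⟩ := cubic_coeffs_eq_zero (c₃ := 0)
    (c₂ := a₁ * a₂ + a₁ * a₃ + a₂ * a₃ - 6)
    (c₁ := a₁ * (b₂ + b₃) + a₂ * (b₁ + b₃) + a₃ * (b₁ + b₂)
      - (3 * ξ₁ + 2 * ξ₂ + 2 * ξ₃ + 2 * ξ₄ + 3 * ξ₅))
    (c₀ := b₁ * b₂ + b₁ * b₃ + b₂ * b₃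
      - (ξ₁ * ξ₃ + ξ₁ * ξ₄ + ξ₁ * ξ₅ + ξ₂ * ξ₄ + ξ₂ * ξ₅ + ξ₃ * ξ₅))
    fun t ht => by linear_combination (hμ t ht).2.1
  obtain ⟨hE₃, hF₃, -, -⟩ := cubic_coeffs_eq_zero (c₃ := a₁ * a₂ * a₃ - 1)
    (c₂ := a₂ * a₃ * b₁ + a₁ * a₃ * b₂ + a₁ * a₂ * b₃ - (ξ₁ + ξ₃ + ξ₅))
    (c₁ := a₁ * b₂ * b₃ + a₂ * b₁ * b₃ + a₃ * b₁ * b₂ - (ξ₁ * ξ₃ + ξ₁ * ξ₅ + ξ₃ * ξ₅))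
    (c₀ := b₁ * b₂ * b₃ - ξ₁ * ξ₃ * ξ₅)
    fun t ht => by linear_combination (hμ t ht).2.2
  have ha : IsPathRootTriple a₁ a₂ a₃ :=
    ⟨by linear_combination hE₁, by linear_combination hE₂, by linear_combination hE₃⟩
  exact ⟨ha, ha.eq_ellipseCSq (by linear_combination hF₁) (by linear_combination hF₂)
    (by linear_combination hF₃)⟩

theorem ellipseConds_eq_zero_of_pathCubic_eq_prod {a₁ a₂ a₃ b₁ b₂ b₃ ξ₁ ξ₂ ξ₃ ξ₄ ξ₅ : ℝ}
    (h : ∀ t ∈ Icc (0 : ℝ) 1, ∀ x ∈ Icc (0 : ℝ) 1,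
      pathCubic (t + ξ₁) (t + ξ₂) (t + ξ₃) (t + ξ₄) (t + ξ₅) x =
        (x - (a₁ * t + b₁)) * (x - (a₂ * t + b₂)) * (x - (a₃ * t + b₃))) :
    ellipseCond₁ ξ₁ ξ₂ ξ₃ ξ₄ ξ₅ = 0 ∧ ellipseCond₂ ξ₁ ξ₂ ξ₃ ξ₄ ξ₅ = 0 ∧
      ellipseCond₃ ξ₁ ξ₂ ξ₃ ξ₄ ξ₅ = 0 := by
  obtain ⟨ha, hb₁, hb₂, hb₃⟩ := isPathRootTriple_of_pathCubic_eq_prod h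
  have hdiff : ∀ t ∈ Icc (0 : ℝ) 1, ∀ x ∈ Icc (0 : ℝ) 1,
      ellipseCond₁ ξ₁ ξ₂ ξ₃ ξ₄ ξ₅ / 7 * x - ellipseCond₂ ξ₁ ξ₂ ξ₃ ξ₄ ξ₅ / 7 * t
        - ellipseCond₃ ξ₁ ξ₂ ξ₃ ξ₄ ξ₅ / 49 = 0 := by
    intro t ht x hx
    have e := ha.prod_eq_pathCubic_add ξ₁ ξ₂ ξ₃ ξ₄ ξ₅ t x
    rw [← hb₁, ← hb₂, ← hb₃, ← h t ht x hx] at e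
    linarith
  have h₀₀ := hdiff 0 (by norm_num) 0 (by norm_num)
  have h₀₁ := hdiff 0 (by norm_num) 1 (by norm_num)
  have h₁₀ := hdiff 1 (by norm_num) 0 (by norm_num)
  exact ⟨by linarith, by linarith, by linarith⟩

theorem exists_pathCubic_eq_prod_iff {ξ₁ ξ₂ ξ₃ ξ₄ ξ₅ : ℝ} (hξ₁ : 0 ≤ ξ₁) (hξ₂ : 0 ≤ ξ₂)
    (hξ₃ : 0 ≤ ξ₃) (hξ₄ : 0 ≤ ξ₄) (hξ₅ : 0 ≤ ξ₅) :
    (∃ X₁ X₂ X₃ c₁ c₂ c₃ : ℝ, ∀ θ lam : ℝ,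
      pathCubic (cos θ ^ 2 + ξ₁) (cos θ ^ 2 + ξ₂) (cos θ ^ 2 + ξ₃) (cos θ ^ 2 + ξ₄)
          (cos θ ^ 2 + ξ₅) (lam ^ 2) =
        (lam ^ 2 - (X₁ ^ 2 * cos θ ^ 2 + c₁ ^ 2)) * (lam ^ 2 - (X₂ ^ 2 * cos θ ^ 2 + c₂ ^ 2)) *
          (lam ^ 2 - (X₃ ^ 2 * cos θ ^ 2 + c₃ ^ 2))) ↔
      ellipseCond₁ ξ₁ ξ₂ ξ₃ ξ₄ ξ₅ = 0 ∧ ellipseCond₂ ξ₁ ξ₂ ξ₃ ξ₄ ξ₅ = 0 ∧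
        ellipseCond₃ ξ₁ ξ₂ ξ₃ ξ₄ ξ₅ = 0 := by
  constructor
  · rintro ⟨X₁, X₂, X₃, c₁, c₂, c₃, H⟩
    refine ellipseConds_eq_zero_of_pathCubic_eq_prod (a₁ := X₁ ^ 2) (a₂ := X₂ ^ 2) (a₃ := X₃ ^ 2)
      (b₁ := c₁ ^ 2) (b₂ := c₂ ^ 2) (b₃ := c₃ ^ 2) fun t ht x hx => ?_
    obtain ⟨θ, rfl⟩ := exists_cos_sq_eq ht
    obtain ⟨lam, rfl⟩ : ∃ lam : ℝ, lam ^ 2 = x := ⟨√x, sq_sqrt hx.1⟩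
    exact H θ lam
  · rintro ⟨h₁, h₂, h₃⟩
    obtain ⟨a₁, a₂, a₃, ha⟩ := exists_isPathRootTriple
    obtain ⟨ha₁, ha₂, ha₃⟩ := ha.nonneg
    have hb₁ := ha.ellipseCSq_nonneg hξ₁ hξ₂ hξ₃ hξ₄ hξ₅ h₁ h₂ h₃
    have hb₂ := ha.rotate.ellipseCSq_nonneg hξ₁ hξ₂ hξ₃ hξ₄ hξ₅ h₁ h₂ h₃
    have hb₃ := ha.rotate.rotate.ellipseCSq_nonneg hξ₁ hξ₂ hξ₃ hξ₄ hξ₅ h₁ h₂ h₃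
    refine ⟨√a₁, √a₂, √a₃, √(ellipseCSq ξ₁ ξ₂ ξ₃ ξ₄ ξ₅ a₁), √(ellipseCSq ξ₁ ξ₂ ξ₃ ξ₄ ξ₅ a₂),
      √(ellipseCSq ξ₁ ξ₂ ξ₃ ξ₄ ξ₅ a₃), fun θ lam => ?_⟩
    rw [sq_sqrt ha₁, sq_sqrt ha₂, sq_sqrt ha₃, sq_sqrt hb₁, sq_sqrt hb₂, sq_sqrt hb₃,
      ha.prod_eq_pathCubic_add, h₁, h₂, h₃]
    ring

/-- Criterion for the Kippenhahn curve of a 6-by-6 reciprocal matrix to consist of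
three concentric ellipses centered at the origin. -/
theorem three_concentric_ellipses_six (A : Matrix (Fin 6) (Fin 6) ℂ) (hA : IsReciprocal A)
    (ξ₁ ξ₂ ξ₃ ξ₄ ξ₅ : ℝ)
    (h1 : ξ₁ = (‖A 0 1‖ - ‖A 1 0‖) ^ 2 / 4)
    (h2 : ξ₂ = (‖A 1 2‖ - ‖A 2 1‖) ^ 2 / 4)
    (h3 : ξ₃ = (‖A 2 3‖ - ‖A 3 2‖) ^ 2 / 4)
    (h4 : ξ₄ = (‖A 3 4‖ - ‖A 4 3‖) ^ 2 / 4)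
    (h5 : ξ₅ = (‖A 4 5‖ - ‖A 5 4‖) ^ 2 / 4) :
    (∃ X₁ X₂ X₃ c₁ c₂ c₃ : ℝ, ∀ θ lam : ℝ,
      (RePart θ A - (lam : ℂ) • 1).det =
        (((lam ^ 2 - (X₁ ^ 2 * Real.cos θ ^ 2 + c₁ ^ 2)) *
          (lam ^ 2 - (X₂ ^ 2 * Real.cos θ ^ 2 + c₂ ^ 2)) *
          (lam ^ 2 - (X₃ ^ 2 * Real.cos θ ^ 2 + c₃ ^ 2)) : ℝ) : ℂ)) ↔
      (2 * ξ₁ ^ 2 + 4 * ξ₂ * ξ₁ - 2 * ξ₃ * ξ₁ - 3 * ξ₄ * ξ₁ - 3 * ξ₅ * ξ₁ + ξ₂ ^ 2 + ξ₄ ^ 2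
          + 2 * ξ₅ ^ 2 + 2 * ξ₂ * ξ₃ - 5 * ξ₂ * ξ₄ + 2 * ξ₃ * ξ₄ - 3 * ξ₂ * ξ₅
          - 2 * ξ₃ * ξ₅ + 4 * ξ₄ * ξ₅ = 0 ∧
       2 * ξ₁ ^ 2 + ξ₂ * ξ₁ - 3 * ξ₃ * ξ₁ + ξ₄ * ξ₁ - 3 * ξ₅ * ξ₁ - ξ₂ ^ 2 + ξ₃ ^ 2 - ξ₄ ^ 2
          + 2 * ξ₅ ^ 2 + 2 * ξ₂ * ξ₃ - 2 * ξ₂ * ξ₄ + 2 * ξ₃ * ξ₄ + ξ₂ * ξ₅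
          - 3 * ξ₃ * ξ₅ + ξ₄ * ξ₅ = 0 ∧
       ξ₁ ^ 3 + 2 * ξ₂ * ξ₁ ^ 2 + 4 * ξ₃ * ξ₁ ^ 2 + 2 * ξ₄ * ξ₁ ^ 2 + 3 * ξ₅ * ξ₁ ^ 2
          - ξ₂ ^ 2 * ξ₁ + 3 * ξ₃ ^ 2 * ξ₁ - ξ₄ ^ 2 * ξ₁ + 3 * ξ₅ ^ 2 * ξ₁
          + 3 * ξ₂ * ξ₃ * ξ₁ - 2 * ξ₂ * ξ₄ * ξ₁ + 3 * ξ₃ * ξ₄ * ξ₁ + 4 * ξ₂ * ξ₅ * ξ₁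
          - 41 * ξ₃ * ξ₅ * ξ₁ + 4 * ξ₄ * ξ₅ * ξ₁ - ξ₂ ^ 3 - ξ₃ ^ 3 - ξ₄ ^ 3 + ξ₅ ^ 3
          + 2 * ξ₂ * ξ₃ ^ 2 - 3 * ξ₂ * ξ₄ ^ 2 + ξ₃ * ξ₄ ^ 2 + 2 * ξ₂ * ξ₅ ^ 2
          + 4 * ξ₃ * ξ₅ ^ 2 + 2 * ξ₄ * ξ₅ ^ 2 + ξ₂ ^ 2 * ξ₃ - 3 * ξ₂ ^ 2 * ξ₄
          + 2 * ξ₃ ^ 2 * ξ₄ + 2 * ξ₂ * ξ₃ * ξ₄ - ξ₂ ^ 2 * ξ₅ + 3 * ξ₃ ^ 2 * ξ₅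
          - ξ₄ ^ 2 * ξ₅ + 3 * ξ₂ * ξ₃ * ξ₅ - 2 * ξ₂ * ξ₄ * ξ₅ + 3 * ξ₃ * ξ₄ * ξ₅ = 0) := by
  have hdet : ∀ θ lam : ℝ, (RePart θ A - (lam : ℂ) • 1).det =
      ((pathCubic (cos θ ^ 2 + ξ₁) (cos θ ^ 2 + ξ₂) (cos θ ^ 2 + ξ₃) (cos θ ^ 2 + ξ₄)
        (cos θ ^ 2 + ξ₅) (lam ^ 2) : ℝ) : ℂ) := by
    intro θ lam
    rw [det_RePart_sub_smul_one hA, h1, h2, h3, h4, h5]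
  simp_rw [hdet, Complex.ofReal_inj]
  exact exists_pathCubic_eq_prod_iff (by rw [h1]; positivity) (by rw [h2]; positivity)
    (by rw [h3]; positivity) (by rw [h4]; positivity) (by rw [h5]; positivity)
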